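/- arXiv:1308.2919 — 2 statements merged into one kernel-verified Lean document; each statement's English description precedes it below -/
import Mathlib

section
/- Let 𝕋 = ℝ/ℤ with its Haar probability measure and let f : 𝕋 → ℂ be bounded measurable. For k ≥ 1, x ∈ 𝕋 and u = (u_1, …, u_k) ∈ 𝕋^k define △^k f(x; u) := ∏_{ω ∈ {0,1}^k} C^{|ω|} f(x + ω·u), where ω·u = ∑_i ω_i u_i, |ω| = ∑_i ω_i, and C denotes complex conjugation. Then for every k ≥ 1, ∫_𝕋 ∫_{𝕋^{k+1}} △^{k+1} f(x; v) dv dx = ∑_{η ∈ ℤ^k} | ∫_𝕋 ∫_{𝕋^k} △^k f(x; u) e^{−2πi η·u} du dx |², where both sides are finite. -/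
open MeasureTheory Complex

attribute [local instance] ZeroLEOneClass.factZeroLtOne

/-- The Gowers box product `△^k f(x; u) = ∏_{ω ∈ {0,1}^k} C^{|ω|} f(x + ω·u)` on `𝕋 = ℝ/ℤ`,
where `ω·u = ∑_i ω_i u_i`, `|ω| = ∑_i ω_i` and `C` is complex conjugation. -/
noncomputable def gowersBox (k : ℕ) (f : UnitAddCircle → ℂ) (x : UnitAddCircle)
    (u : Fin k → UnitAddCircle) : ℂ :=
  ∏ ω : Fin k → Bool,
    ((starRingEnd ℂ))^[∑ i, if ω i then 1 else 0]
      (f (x + ∑ i, if ω i then u i else 0))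

open AddCircle Submodule Set ContinuousMap
open scoped ComplexConjugate ENNReal

namespace GowersAux
local notation "𝕋" => UnitAddCircle

theorem voleq : (volume : Measure 𝕋) = haarAddCircle := by
  rw [AddCircle.volume_eq_smul_haarAddCircle, ENNReal.ofReal_one, one_smul]

instance : IsProbabilityMeasure (volume : Measure 𝕋) := voleq ▸ inferInstance
instance : (volume : Measure 𝕋).IsAddLeftInvariant := voleq ▸ inferInstance
instance : (volume : Measure 𝕋).IsAddRightInvariant := voleq ▸ inferInstance

theorem integrable_bdd {α : Type*} [MeasurableSpace α] {μ : Measure α} [IsFiniteMeasure μ]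
    {h : α → ℂ} (hm : AEStronglyMeasurable h μ) {C : ℝ} (hb : ∀ a, ‖h a‖ ≤ C) :
    Integrable h μ :=
  ⟨hm, HasFiniteIntegral.of_bounded (Filter.Eventually.of_forall hb)⟩

noncomputable def mchar {k : ℕ} (η : Fin k → ℤ) : C((Fin k → 𝕋), ℂ) :=
  ∏ i, (fourier (η i)).comp (ContinuousMap.mk (fun u => u i) (continuous_apply i))

theorem mchar_apply {k : ℕ} (η : Fin k → ℤ) (u : Fin k → 𝕋) :
    mchar η u = ∏ i, fourier (η i) (u i) := by simp [mchar]

theorem mchar_zero {k : ℕ} : mchar (0 : Fin k → ℤ) = 1 := by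
  ext u; simp [mchar_apply, fourier_zero]

theorem mchar_add {k : ℕ} (η ξ : Fin k → ℤ) : mchar (η + ξ) = mchar η * mchar ξ := by
  ext u
  simp only [mchar_apply, ContinuousMap.mul_apply, ← Finset.prod_mul_distrib]
  exact Finset.prod_congr rfl fun i _ => by rw [Pi.add_apply, fourier_add]

theorem star_mchar {k : ℕ} (η : Fin k → ℤ) : star (mchar η) = mchar (-η) := by
  ext u
  simp only [ContinuousMap.star_apply, mchar_apply, RCLike.star_def, map_prod]
  exact Finset.prod_congr rfl fun i _ => by rw [← fourier_neg]; rfl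

theorem integral_fourier (m : ℤ) : (∫ x : 𝕋, fourier m x) = if m = 0 then 1 else 0 := by
  split_ifs with h
  · subst h; simp only [fourier_zero]; simp
  · exact integral_eq_zero_of_add_right_eq_neg (fourier_add_half_inv_index h one_pos)

variable {k : ℕ}

theorem integral_conj_mchar_mul (η ξ : Fin k → ℤ) :
    (∫ u : Fin k → 𝕋, conj (mchar η u) * mchar ξ u) = if η = ξ then 1 else 0 := by
  have : ∀ u : Fin k → 𝕋, conj (mchar η u) * mchar ξ u
      = ∏ i, fourier (-η i + ξ i) (u i) := by
    intro u
    simp only [mchar_apply, map_prod, ← Finset.prod_mul_distrib]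
    exact Finset.prod_congr rfl fun i _ => by rw [← fourier_neg, ← fourier_add]
  simp_rw [this]
  rw [volume_pi, MeasureTheory.integral_fintype_prod_eq_prod (ι := Fin k)
    (f := fun i (x : 𝕋) => fourier (-η i + ξ i) x)]
  simp_rw [integral_fourier]
  by_cases h : η = ξ
  · subst h; simp
  · rw [if_neg h]
    obtain ⟨i, hi⟩ : ∃ i, η i ≠ ξ i := by
      by_contra hc; push_neg at hc; exact h (funext hc)
    refine Finset.prod_eq_zero (Finset.mem_univ i) ?_
    rw [if_neg (by omega)]

noncomputable abbrev mcharLp (η : Fin k → ℤ) : Lp ℂ 2 (volume : Measure (Fin k → 𝕋)) :=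
  ContinuousMap.toLp (E := ℂ) 2 volume ℂ (mchar η)

theorem orthonormal_mchar : Orthonormal ℂ (mcharLp (k := k)) := by
  rw [orthonormal_iff_ite]
  intro η ξ
  rw [ContinuousMap.inner_toLp volume (mchar η) (mchar ξ)]
  exact (integral_congr_ae (Filter.Eventually.of_forall fun u => mul_comm _ _)).trans
    (integral_conj_mchar_mul η ξ)

/-- The star subalgebra generated by the characters. -/
noncomputable def mSubalg (k : ℕ) : StarSubalgebra ℂ C((Fin k → 𝕋), ℂ) where
  toSubalgebra := Algebra.adjoin ℂ (range (mchar (k := k)))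
  star_mem' := by
    show Algebra.adjoin ℂ (range (mchar (k := k))) ≤
      star (Algebra.adjoin ℂ (range (mchar (k := k))))
    refine Algebra.adjoin_le ?_
    rintro - ⟨η, rfl⟩
    rw [SetLike.mem_coe, Subalgebra.mem_star_iff, star_mchar]
    exact Algebra.subset_adjoin ⟨-η, rfl⟩

theorem mSubalg_coe :
    Subalgebra.toSubmodule (mSubalg k).toSubalgebra = span ℂ (range (mchar (k := k))) := by
  apply Algebra.adjoin_eq_span_of_subset
  refine Subset.trans ?_ Submodule.subset_span
  intro x hx
  refine Submonoid.closure_induction (fun _ => id) ⟨0, mchar_zero⟩ ?_ hx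
  rintro - - - - ⟨η, rfl⟩ ⟨ξ, rfl⟩
  exact ⟨η + ξ, mchar_add η ξ⟩

theorem mSubalg_separatesPoints : (mSubalg k).SeparatesPoints := by
  intro u v huv
  obtain ⟨i, hi⟩ : ∃ i, u i ≠ v i := by
    by_contra hc; push_neg at hc; exact huv (funext hc)
  refine ⟨_, ⟨mchar (Pi.single i 1), Algebra.subset_adjoin ⟨Pi.single i 1, rfl⟩, rfl⟩, ?_⟩
  dsimp only
  have heval : ∀ w : Fin k → 𝕋, mchar (Pi.single i 1) w = toCircle (w i) := by
    intro w
    rw [mchar_apply, Finset.prod_eq_single i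
      (fun j _ hj => by rw [Pi.single_eq_of_ne hj, fourier_zero]) (by simp)]
    rw [Pi.single_eq_same, fourier_one]
  rw [heval, heval]
  intro hc
  rw [Circle.coe_inj] at hc
  exact hi (injective_toCircle one_ne_zero hc)

theorem mSubalg_closure_eq_top : (mSubalg k).topologicalClosure = ⊤ :=
  ContinuousMap.starSubalgebra_topologicalClosure_eq_top_of_separatesPoints _
    mSubalg_separatesPoints

theorem span_mchar_closure_eq_top :
    (span ℂ (range (mchar (k := k)))).topologicalClosure = ⊤ := by
  rw [← mSubalg_coe]
  exact congr_arg (Subalgebra.toSubmodule <| StarSubalgebra.toSubalgebra ·)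
    mSubalg_closure_eq_top

theorem span_mcharLp_closure_eq_top :
    (span ℂ (range (mcharLp (k := k)))).topologicalClosure = ⊤ := by
  convert (ContinuousMap.toLp_denseRange ℂ (volume : Measure (Fin k → 𝕋)) ℂ
      (by norm_num : (2 : ℝ≥0∞) ≠ ⊤)).topologicalClosure_map_submodule
    span_mchar_closure_eq_top
  · rfl
  erw [map_span, range_comp]
  simp only [ContinuousLinearMap.coe_coe]

noncomputable def mbasis : HilbertBasis (Fin k → ℤ) ℂ (Lp ℂ 2 (volume : Measure (Fin k → 𝕋))) :=
  HilbertBasis.mk orthonormal_mchar (span_mcharLp_closure_eq_top).ge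

theorem coe_mbasis : ⇑(mbasis (k := k)) = mcharLp := HilbertBasis.coe_mk _ _

theorem fourier_add_apply {T : ℝ} (n : ℤ) (x y : AddCircle T) :
    fourier n (x + y) = fourier n x * fourier n y := by
  simp only [fourier_apply, zsmul_add, toCircle_add, Circle.coe_mul]

theorem fourier_sum {T : ℝ} {ι : Type*} (s : Finset ι) (n : ℤ) (v : ι → AddCircle T) :
    fourier n (∑ i ∈ s, v i) = ∏ i ∈ s, fourier n (v i) := by
  classical
  induction s using Finset.cons_induction with
  | empty => simp [fourier_eval_zero]
  | cons a s ha ih => rw [Finset.sum_cons, Finset.prod_cons, fourier_add_apply, ih]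

theorem fourier_neg_one_zsmul {T : ℝ} (n : ℤ) (x : AddCircle T) :
    fourier (-1) (n • x) = fourier (-n) x := by
  simp only [fourier_apply, smul_smul]
  norm_num

theorem char_eq_conj_mchar (η : Fin k → ℤ) (u : Fin k → 𝕋) :
    (fourier (-1) (∑ i, η i • u i) : ℂ) = conj (mchar η u) := by
  rw [fourier_sum, mchar_apply, map_prod]
  exact Finset.prod_congr rfl fun i _ => by rw [fourier_neg_one_zsmul, fourier_neg]

theorem norm_char (η : Fin k → ℤ) (u : Fin k → 𝕋) :
    ‖(fourier (-1) (∑ i, η i • u i) : ℂ)‖ = 1 := by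
  rw [fourier_apply]; simp [Circle.norm_coe]

theorem parseval_char (g : (Fin k → 𝕋) → ℂ) (hg : AEStronglyMeasurable g volume)
    (C : ℝ) (hb : ∀ u, ‖g u‖ ≤ C) :
    Summable (fun η : Fin k → ℤ => ‖∫ u, g u * fourier (-1) (∑ i, η i • u i)‖ ^ 2) ∧
    (∑' η : Fin k → ℤ, ‖∫ u, g u * fourier (-1) (∑ i, η i • u i)‖ ^ 2)
      = ∫ u, ‖g u‖ ^ 2 := by
  have hmem : MemLp g 2 (volume : Measure (Fin k → 𝕋)) :=
    MemLp.of_bound hg C (Filter.Eventually.of_forall hb)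
  set gL := hmem.toLp g with hgL
  have hrepr : ∀ η : Fin k → ℤ,
      mbasis.repr gL η = ∫ u, g u * fourier (-1) (∑ i, η i • u i) := by
    intro η
    rw [mbasis.repr_apply_apply gL η, coe_mbasis]
    rw [MeasureTheory.L2.inner_def]
    have h1 : ∀ᵐ u : Fin k → 𝕋, (mcharLp η : (Fin k → 𝕋) → ℂ) u = mchar η u :=
      ContinuousMap.coeFn_toLp volume (mchar η)
    have h2 : ∀ᵐ u : Fin k → 𝕋, (gL : (Fin k → 𝕋) → ℂ) u = g u := hmem.coeFn_toLp
    rw [show (∫ u, g u * fourier (-1) (∑ i, η i • u i))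
        = ∫ u, conj (mchar η u) * g u from
      integral_congr_ae (Filter.Eventually.of_forall fun u => by
        simp only []
        rw [char_eq_conj_mchar, mul_comm])]
    apply integral_congr_ae
    filter_upwards [h1, h2] with u hu1 hu2
    rw [RCLike.inner_apply, hu1, hu2, mul_comm]
  have hsummable : Summable (fun η : Fin k → ℤ => ‖mbasis.repr gL η‖ ^ 2) := by
    have := lp.memℓp (mbasis.repr gL)
    rw [memℓp_gen_iff (by norm_num : 0 < (2 : ℝ≥0∞).toReal)] at this
    have h2 : ((2 : ℝ≥0∞) : ℝ≥0∞).toReal = (2 : ℝ) := by norm_num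
    refine this.congr fun η => ?_
    rw [h2, Real.rpow_two]
  have htsum : (∑' η : Fin k → ℤ, ‖mbasis.repr gL η‖ ^ 2) = ∫ u, ‖g u‖ ^ 2 := by
    have H₁ : ‖mbasis.repr gL‖ ^ 2 = ∑' η, ‖mbasis.repr gL η‖ ^ 2 := by
      apply_mod_cast lp.norm_rpow_eq_tsum ?_ (mbasis.repr gL)
      norm_num
    have H₂ : ‖mbasis.repr gL‖ ^ 2 = ‖gL‖ ^ 2 := by simp
    have H₃ := congr_arg RCLike.re
      (@MeasureTheory.L2.inner_def (Fin k → 𝕋) ℂ ℂ _ _ _ _ _ gL gL)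
    rw [← integral_re (MeasureTheory.L2.integrable_inner gL gL)] at H₃
    simp only [← InnerProductSpace.norm_sq_eq_re_inner] at H₃
    have H₄ : (∫ u, ‖(gL : (Fin k → 𝕋) → ℂ) u‖ ^ 2) = ∫ u, ‖g u‖ ^ 2 := by
      apply integral_congr_ae
      filter_upwards [hmem.coeFn_toLp] with u hu
      rw [hu]
    rw [← H₁, H₂, H₃, H₄]
  constructor
  · exact hsummable.congr fun η => by rw [hrepr]
  · rw [← htsum]
    exact tsum_congr fun η => by rw [hrepr]

theorem conj_iterate_norm (m : ℕ) (z : ℂ) : ‖(starRingEnd ℂ)^[m] z‖ = ‖z‖ := by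
  induction m with
  | zero => rfl
  | succ n ih => rw [Function.iterate_succ_apply', RCLike.norm_conj, ih]

theorem measurable_conj_iterate (m : ℕ) : Measurable ((starRingEnd ℂ)^[m] : ℂ → ℂ) := by
  induction m with
  | zero => exact measurable_id
  | succ n ih =>
    rw [Function.iterate_succ']
    exact Complex.continuous_conj.measurable.comp ih

theorem gowersBox_bound (k : ℕ) (f : 𝕋 → ℂ) {M : ℝ} (hM : ∀ x, ‖f x‖ ≤ M) (x : 𝕋)
    (u : Fin k → 𝕋) : ‖gowersBox k f x u‖ ≤ M ^ Fintype.card (Fin k → Bool) := by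
  rw [gowersBox, norm_prod, ← Finset.card_univ, ← Finset.prod_const]
  exact Finset.prod_le_prod (fun _ _ => norm_nonneg _)
    (fun ω _ => by rw [conj_iterate_norm]; exact hM _)

theorem measurable_gowersBox (k : ℕ) (f : 𝕋 → ℂ) (hf : Measurable f) :
    Measurable (fun p : 𝕋 × (Fin k → 𝕋) => gowersBox k f p.1 p.2) := by
  unfold gowersBox
  refine Finset.measurable_prod _ fun ω _ => ?_
  have hcont : Continuous fun p : 𝕋 × (Fin k → 𝕋) => p.1 + ∑ i, (if ω i then p.2 i else 0) :=
    continuous_fst.add (continuous_finset_sum _ fun i _ => by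
      by_cases h : ω i
      · simp only [h, if_true]; exact (continuous_apply i).comp continuous_snd
      · simp only [h, if_false]; exact continuous_const)
  exact (measurable_conj_iterate _).comp (hf.comp hcont.measurable)

theorem gowersBox_cons (k : ℕ) (f : 𝕋 → ℂ) (x t : 𝕋) (u : Fin k → 𝕋) :
    gowersBox (k+1) f x (Fin.cons t u) =
      gowersBox k f x u * conj (gowersBox k f (x + t) u) := by
  unfold gowersBox
  rw [← ((Fin.consEquiv (fun _ : Fin (k+1) => Bool)).prod_comp
      (fun ω => ((starRingEnd ℂ))^[∑ i, if ω i then 1 else 0]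
        (f (x + ∑ i, if ω i then Fin.cons t u i else 0))))]
  rw [Fintype.prod_prod_type, Fintype.prod_bool]
  have hsum1 : ∀ (b : Bool) (ω : Fin k → Bool),
      (∑ i : Fin (k+1), if (Fin.cons b ω : Fin (k+1) → Bool) i then (1 : ℕ) else 0)
        = (if b then 1 else 0) + ∑ i : Fin k, if ω i then 1 else 0 := by
    intro b ω
    rw [Fin.sum_univ_succ]
    simp [Fin.cons_zero, Fin.cons_succ]
  have hsum2 : ∀ (b : Bool) (ω : Fin k → Bool),
      (∑ i : Fin (k+1), if (Fin.cons b ω : Fin (k+1) → Bool) i then (Fin.cons t u : Fin (k+1) → 𝕋) i else 0)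
        = (if b then t else 0) + ∑ i : Fin k, if ω i then u i else 0 := by
    intro b ω
    rw [Fin.sum_univ_succ]
    simp [Fin.cons_zero, Fin.cons_succ]
  have htrue : ∀ ω : Fin k → Bool,
      (starRingEnd ℂ)^[∑ i : Fin (k+1), if Fin.consEquiv (fun _ => Bool) (true, ω) i then 1 else 0]
        (f (x + ∑ i : Fin (k+1), if Fin.consEquiv (fun _ => Bool) (true, ω) i
            then Fin.cons t u i else 0))
      = conj ((starRingEnd ℂ)^[∑ i : Fin k, if ω i then 1 else 0]
          (f ((x + t) + ∑ i : Fin k, if ω i then u i else 0))) := by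
    intro ω
    show (starRingEnd ℂ)^[∑ i : Fin (k+1), if (Fin.cons true ω : Fin (k+1) → Bool) i then 1 else 0]
        (f (x + ∑ i : Fin (k+1), if (Fin.cons true ω : Fin (k+1) → Bool) i then (Fin.cons t u : Fin (k+1) → 𝕋) i else 0)) = _
    rw [hsum1, hsum2]
    simp only [if_true]
    rw [← add_assoc, Function.iterate_add_apply, Function.iterate_one]
  have hfalse : ∀ ω : Fin k → Bool,
      (starRingEnd ℂ)^[∑ i : Fin (k+1), if Fin.consEquiv (fun _ => Bool) (false, ω) i
          then 1 else 0]
        (f (x + ∑ i : Fin (k+1), if Fin.consEquiv (fun _ => Bool) (false, ω) i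
            then Fin.cons t u i else 0))
      = (starRingEnd ℂ)^[∑ i : Fin k, if ω i then 1 else 0]
          (f (x + ∑ i : Fin k, if ω i then u i else 0)) := by
    intro ω
    show (starRingEnd ℂ)^[∑ i : Fin (k+1), if (Fin.cons false ω : Fin (k+1) → Bool) i then 1 else 0]
        (f (x + ∑ i : Fin (k+1), if (Fin.cons false ω : Fin (k+1) → Bool) i then (Fin.cons t u : Fin (k+1) → 𝕋) i else 0)) = _
    rw [hsum1, hsum2]
    norm_num
  rw [Finset.prod_congr rfl fun ω _ => htrue ω, Finset.prod_congr rfl fun ω _ => hfalse ω,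
    ← map_prod, mul_comm]

theorem integral_cons {k : ℕ} (F : (Fin (k+1) → 𝕋) → ℂ)
    (hF : Integrable F (volume : Measure (Fin (k+1) → 𝕋))) :
    ∫ v, F v = ∫ t : 𝕋, ∫ u : Fin k → 𝕋, F (Fin.cons t u) := by
  have hmp := (measurePreserving_piFinSuccAbove (fun _ : Fin (k+1) => (volume : Measure 𝕋)) 0).symm
  have heq : ∀ p : 𝕋 × (Fin k → 𝕋),
      (MeasurableEquiv.piFinSuccAbove (fun _ : Fin (k+1) => 𝕋) 0).symm p = Fin.cons p.1 p.2 := by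
    intro p
    simp [MeasurableEquiv.piFinSuccAbove_symm_apply, Fin.insertNthEquiv, Fin.insertNth_zero,
      Fin.zero_succAbove, Function.comp_def]
  have hF' : Integrable F (Measure.pi fun _ : Fin (k+1) => (volume : Measure 𝕋)) := by
    rwa [← volume_pi]
  have hInt : Integrable
      (fun p : 𝕋 × (Fin k → 𝕋) => F ((MeasurableEquiv.piFinSuccAbove (fun _ => 𝕋) 0).symm p))
      ((volume : Measure 𝕋).prod (Measure.pi fun _ : Fin k => (volume : Measure 𝕋))) :=
    (hmp.integrable_comp_emb (MeasurableEquiv.measurableEmbedding _)).mpr hF'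
  calc ∫ v, F v = ∫ v, F v ∂(Measure.pi fun _ : Fin (k+1) => (volume : Measure 𝕋)) := by
        rw [← volume_pi]
    _ = ∫ p : 𝕋 × (Fin k → 𝕋),
          F ((MeasurableEquiv.piFinSuccAbove (fun _ => 𝕋) 0).symm p)
          ∂((volume : Measure 𝕋).prod (Measure.pi fun _ : Fin k => (volume : Measure 𝕋))) :=
        (hmp.integral_comp (MeasurableEquiv.measurableEmbedding _) F).symm
    _ = ∫ t : 𝕋, ∫ u : Fin k → 𝕋,
          F ((MeasurableEquiv.piFinSuccAbove (fun _ => 𝕋) 0).symm (t, u))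
          ∂(Measure.pi fun _ : Fin k => (volume : Measure 𝕋)) := integral_prod _ hInt
    _ = ∫ t : 𝕋, ∫ u : Fin k → 𝕋, F (Fin.cons t u) := by
        simp_rw [heq, volume_pi]

end GowersAux

/-- **Gowers norm recursion identity:** for bounded measurable `f : 𝕋 → ℂ` and `k ≥ 1`,
`∫_𝕋 ∫_{𝕋^{k+1}} △^{k+1} f(x; v) dv dx
  = ∑_{η ∈ ℤ^k} |∫_𝕋 ∫_{𝕋^k} △^k f(x; u) e^{−2πi η·u} du dx|²`, both sides being finite
(the sum on the right is summable). -/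
theorem gowersBox_integral_eq_tsum_sq
    (k : ℕ) (hk : 1 ≤ k)
    (f : UnitAddCircle → ℂ) (hf : Measurable f) (hfbdd : ∃ M, ∀ x, ‖f x‖ ≤ M) :
    Summable (fun η : Fin k → ℤ =>
        ‖∫ x : UnitAddCircle, ∫ u : Fin k → UnitAddCircle,
            gowersBox k f x u * fourier (-1) (∑ i, η i • u i)‖ ^ 2) ∧
      (∫ x : UnitAddCircle, ∫ v : Fin (k + 1) → UnitAddCircle, gowersBox (k + 1) f x v) =
        (((∑' η : Fin k → ℤ,
            ‖∫ x : UnitAddCircle, ∫ u : Fin k → UnitAddCircle,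
              gowersBox k f x u * fourier (-1) (∑ i, η i • u i)‖ ^ 2) : ℝ) : ℂ) := by
  classical
  obtain ⟨M, hM⟩ := hfbdd
  set B : ℝ := M ^ Fintype.card (Fin k → Bool) with hBdef
  have hGm := GowersAux.measurable_gowersBox k f hf
  have hGb : ∀ (x : UnitAddCircle) (u : Fin k → UnitAddCircle), ‖gowersBox k f x u‖ ≤ B :=
    fun x u => GowersAux.gowersBox_bound k f hM x u
  have hB0 : (0 : ℝ) ≤ B := le_trans (norm_nonneg _) (hGb 0 fun _ => 0)
  set g : (Fin k → UnitAddCircle) → ℂ := fun u => ∫ x, gowersBox k f x u with hgdef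
  have hgm : StronglyMeasurable g := hGm.stronglyMeasurable.integral_prod_left'
  have hgb : ∀ u, ‖g u‖ ≤ B := by
    intro u
    calc ‖g u‖ ≤ B * (volume (Set.univ : Set UnitAddCircle)).toReal :=
          norm_integral_le_of_norm_le_const (Filter.Eventually.of_forall fun x => hGb x u)
      _ = B := by simp
  obtain ⟨hs, hts⟩ := GowersAux.parseval_char g hgm.aestronglyMeasurable B hgb
  -- the Fourier coefficient identity
  have hcoeff : ∀ η : Fin k → ℤ,
      (∫ x, ∫ u, gowersBox k f x u * fourier (-1) (∑ i, η i • u i))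
        = ∫ u, g u * fourier (-1) (∑ i, η i • u i) := by
    intro η
    have hcc : Continuous fun u : Fin k → UnitAddCircle =>
        (fourier (-1) (∑ i, η i • u i) : ℂ) :=
      (fourier (-1)).continuous.comp
        (continuous_finset_sum _ fun i _ => (continuous_zsmul (η i)).comp (continuous_apply i))
    have hint : Integrable (Function.uncurry fun (x : UnitAddCircle)
        (u : Fin k → UnitAddCircle) => gowersBox k f x u * fourier (-1) (∑ i, η i • u i))
        (volume.prod volume) := by
      refine GowersAux.integrable_bdd ?_ (C := B) ?_
      · exact hGm.aestronglyMeasurable.mul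
          ((hcc.measurable.comp measurable_snd).aestronglyMeasurable)
      · intro p
        rw [Function.uncurry, norm_mul, GowersAux.norm_char, mul_one]
        exact hGb _ _
    rw [integral_integral_swap hint]
    exact integral_congr_ae (Filter.Eventually.of_forall fun u => integral_mul_const _ _)
  have hB1 := GowersAux.gowersBox_bound (k+1) f hM
  have hG1m := GowersAux.measurable_gowersBox (k+1) f hf
  have hstep : ∀ x : UnitAddCircle,
      (∫ v : Fin (k+1) → UnitAddCircle, gowersBox (k+1) f x v)
        = ∫ u, gowersBox k f x u * conj (g u) := by
    intro x
    have hIv : Integrable (fun v : Fin (k+1) → UnitAddCircle => gowersBox (k+1) f x v)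
        volume := by
      refine GowersAux.integrable_bdd ?_ (C := M ^ Fintype.card (Fin (k+1) → Bool))
        (fun v => hB1 x v)
      exact ((hG1m.comp (measurable_const.prodMk measurable_id)).aestronglyMeasurable :)
    rw [GowersAux.integral_cons _ hIv]
    have h1 : ∀ (t : UnitAddCircle) (u : Fin k → UnitAddCircle),
        gowersBox (k+1) f x (Fin.cons t u)
          = gowersBox k f x u * conj (gowersBox k f (x + t) u) :=
      GowersAux.gowersBox_cons k f x
    simp_rw [h1]
    have hint2 : Integrable (Function.uncurry fun (t : UnitAddCircle)
        (u : Fin k → UnitAddCircle) => gowersBox k f x u * conj (gowersBox k f (x + t) u))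
        (volume.prod volume) := by
      refine GowersAux.integrable_bdd ?_ (C := B * B) ?_
      · refine AEStronglyMeasurable.mul ?_ ?_
        · exact (hGm.comp (measurable_const.prodMk measurable_snd)).aestronglyMeasurable
        · exact (Complex.continuous_conj.measurable.comp
            (hGm.comp ((measurable_fst.const_add x).prodMk measurable_snd))).aestronglyMeasurable
      · intro p
        rw [Function.uncurry, norm_mul, RCLike.norm_conj]
        exact mul_le_mul (hGb _ _) (hGb _ _) (norm_nonneg _) hB0
    rw [integral_integral_swap hint2]
    refine integral_congr_ae (Filter.Eventually.of_forall fun u => ?_)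
    show (∫ t : UnitAddCircle, gowersBox k f x u * (starRingEnd ℂ) (gowersBox k f (x + t) u))
      = gowersBox k f x u * (starRingEnd ℂ) (g u)
    rw [MeasureTheory.integral_const_mul, integral_conj,
      integral_add_left_eq_self (fun t => gowersBox k f t u) x]
  have hint3 : Integrable (Function.uncurry fun (x : UnitAddCircle)
      (u : Fin k → UnitAddCircle) => gowersBox k f x u * conj (g u)) (volume.prod volume) := by
    refine GowersAux.integrable_bdd ?_ (C := B * B) ?_
    · exact hGm.aestronglyMeasurable.mul ((Complex.continuous_conj.measurable.comp
        (hgm.measurable.comp measurable_snd)).aestronglyMeasurable)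
    · intro p
      rw [Function.uncurry, norm_mul, RCLike.norm_conj]
      exact mul_le_mul (hGb _ _) (hgb _) (norm_nonneg _) hB0
  have hLHS : (∫ x, ∫ v : Fin (k+1) → UnitAddCircle, gowersBox (k+1) f x v)
      = (((∫ u, ‖g u‖ ^ 2) : ℝ) : ℂ) := by
    calc (∫ x, ∫ v : Fin (k+1) → UnitAddCircle, gowersBox (k+1) f x v)
        = ∫ x, ∫ u, gowersBox k f x u * conj (g u) :=
          integral_congr_ae (Filter.Eventually.of_forall hstep)
      _ = ∫ u, ∫ x, gowersBox k f x u * conj (g u) := integral_integral_swap hint3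
      _ = ∫ u, g u * conj (g u) :=
          integral_congr_ae (Filter.Eventually.of_forall fun u => integral_mul_const _ _)
      _ = ∫ u, ((‖g u‖ ^ 2 : ℝ) : ℂ) :=
          integral_congr_ae (Filter.Eventually.of_forall fun u => by
            show g u * (starRingEnd ℂ) (g u) = ((‖g u‖ ^ 2 : ℝ) : ℂ)
            rw [Complex.ofReal_pow, Complex.mul_conj'])
      _ = (((∫ u, ‖g u‖ ^ 2) : ℝ) : ℂ) :=
          integral_ofReal (f := fun u => ‖g u‖ ^ 2)
  refine ⟨hs.congr fun η => by rw [hcoeff η], ?_⟩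
  have hsum_eq : (∑' η : Fin k → ℤ,
      ‖∫ x : UnitAddCircle, ∫ u : Fin k → UnitAddCircle,
        gowersBox k f x u * fourier (-1) (∑ i, η i • u i)‖ ^ 2) = ∫ u, ‖g u‖ ^ 2 := by
    rw [← hts]
    exact tsum_congr fun η => by rw [hcoeff η]
  rw [hLHS, hsum_eq]
end

section
/- Let 𝕋 = ℝ/ℤ with its Haar probability measure, let k ≥ 2, and let f : 𝕋 → ℂ be bounded measurable. For x ∈ 𝕋 and u = (u_1, …, u_k) ∈ 𝕋^k define △^k f(x; u) := ∏_{ω ∈ {0,1}^k} C^{|ω|} f(x + ω·u), where ω·u = ∑_i ω_i u_i, |ω| = ∑_i ω_i, and C denotes complex conjugation. Then for every η ∈ ℤ^k, | ∫_𝕋 ∫_{𝕋^k} △^k f(x; u) e^{−2πi η·u} du dx | ≤ ∫_𝕋 ∫_{𝕋^k} △^k f(x; u) du dx; in particular the right-hand side is a nonnegative real number. -/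
open MeasureTheory Complex ComplexOrder

attribute [local instance] ZeroLEOneClass.factZeroLtOne

local notation "𝕋" => UnitAddCircle

namespace GowersBoxAux

instance : IsProbabilityMeasure (volume : Measure 𝕋) := ⟨UnitAddCircle.measure_univ⟩

lemma conjIter_measurable (n : ℕ) : Measurable ((starRingEnd ℂ)^[n]) := by
  induction n with
  | zero => exact measurable_id
  | succ n ih =>
    rw [Function.iterate_succ']
    exact (Complex.continuous_conj.measurable).comp ih

lemma norm_conjIter (n : ℕ) (z : ℂ) : ‖(starRingEnd ℂ)^[n] z‖ = ‖z‖ := by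
  induction n with
  | zero => rfl
  | succ n ih => rw [Function.iterate_succ_apply', RCLike.norm_conj, ih]

lemma fourier_arg_add {T : ℝ} [Fact (0 < T)] (n : ℤ) (a b : AddCircle T) :
    fourier n (a + b) = fourier n a * fourier n b := by
  simp only [fourier_apply, smul_add, AddCircle.toCircle_add, Circle.coe_mul]

lemma measurable_gowersBox (k : ℕ) (f : 𝕋 → ℂ) (hf : Measurable f) :
    Measurable fun q : 𝕋 × (Fin k → 𝕋) => gowersBox k f q.1 q.2 := by
  unfold gowersBox
  refine Finset.measurable_prod _ fun ω _ => ?_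
  have h1 : Measurable fun q : 𝕋 × (Fin k → 𝕋) => q.1 + ∑ i, (if ω i then q.2 i else 0) := by
    refine Measurable.add measurable_fst ?_
    refine Finset.measurable_sum _ fun i _ => ?_
    by_cases h : ω i
    · simp only [h, ↓reduceIte]
      exact (measurable_pi_apply i).comp measurable_snd
    · simpa [h] using measurable_const
  exact (conjIter_measurable _).comp (hf.comp h1)

lemma norm_gowersBox_le (k : ℕ) (f : 𝕋 → ℂ) (M : ℝ) (hM : ∀ x, ‖f x‖ ≤ M)
    (x : 𝕋) (u : Fin k → 𝕋) : ‖gowersBox k f x u‖ ≤ (max M 0) ^ (2 ^ k) := by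
  unfold gowersBox
  rw [norm_prod]
  have h2 : ∀ ω : Fin k → Bool, ‖((starRingEnd ℂ))^[∑ i, if ω i then 1 else 0]
      (f (x + ∑ i, if ω i then u i else 0))‖ ≤ max M 0 := fun ω => by
    rw [norm_conjIter]
    exact le_trans (hM _) (le_max_left _ _)
  refine le_trans (Finset.prod_le_prod (fun _ _ => norm_nonneg _) fun ω _ => h2 ω) ?_
  rw [Finset.prod_const]
  apply le_of_eq
  congr 1
  simp [Fintype.card_fun]

lemma integrable_of_bdd {α : Type*} [MeasurableSpace α] {μ : Measure α} [IsFiniteMeasure μ]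
    {g : α → ℂ} (hm : AEStronglyMeasurable g μ) {C : ℝ} (hb : ∀ a, ‖g a‖ ≤ C) :
    Integrable g μ :=
  (integrable_const C).mono' hm (Filter.Eventually.of_forall hb)

lemma gowersBox_insertNth (m : ℕ) (f : 𝕋 → ℂ) (j : Fin (m+1)) (x t : 𝕋)
    (u' : Fin m → 𝕋) :
    gowersBox (m+1) f x (j.insertNth t u') =
      gowersBox m f x u' * (starRingEnd ℂ) (gowersBox m f (x + t) u') := by
  unfold gowersBox
  rw [← ((Fin.insertNthEquiv (fun _ => Bool) j).prod_comp
    (fun ω : Fin (m+1) → Bool => ((starRingEnd ℂ))^[∑ i, if ω i then 1 else 0]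
      (f (x + ∑ i, if ω i then (j.insertNth t u') i else 0))))]
  rw [Fintype.prod_prod_type]
  rw [Fintype.prod_bool]
  have hsum1 : ∀ (b : Bool) (ω' : Fin m → Bool),
      (∑ i, if (Fin.insertNthEquiv (fun _ => Bool) j (b, ω')) i then (1:ℕ) else 0)
        = (if b then 1 else 0) + ∑ i', if ω' i' then 1 else 0 := by
    intro b ω'
    rw [Fin.sum_univ_succAbove
      (fun i => if (Fin.insertNthEquiv (fun _ => Bool) j (b, ω')) i then (1:ℕ) else 0) j]
    simp [Fin.insertNthEquiv]
  have hsum2 : ∀ (b : Bool) (ω' : Fin m → Bool),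
      (∑ i, if (Fin.insertNthEquiv (fun _ => Bool) j (b, ω')) i
          then (j.insertNth t u') i else 0)
        = (if b then t else 0) + ∑ i', if ω' i' then u' i' else 0 := by
    intro b ω'
    rw [Fin.sum_univ_succAbove
      (fun i => if (Fin.insertNthEquiv (fun _ => Bool) j (b, ω')) i
        then (j.insertNth t u') i else 0) j]
    simp [Fin.insertNthEquiv]
  rw [mul_comm]
  congr 1
  · refine Finset.prod_congr rfl fun ω' _ => ?_
    rw [hsum1, hsum2]
    simp
  · rw [map_prod]
    refine Finset.prod_congr rfl fun ω' _ => ?_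
    rw [hsum1, hsum2]
    simp only [if_true, if_false]
    rw [← add_assoc, Nat.add_comm 1, Function.iterate_add_apply]
    simp only [Function.iterate_one]
    rw [← Function.iterate_succ_apply, Function.iterate_succ_apply']

/-- Correlation identity: `∫∫ G(x) conj(G(x+t)) e(-nt) = ‖∫ G(x)e(nx)‖²`. -/
lemma corr_integral (G : 𝕋 → ℂ) (n : ℤ) :
    (∫ x : 𝕋, ∫ t : 𝕋, G x * (starRingEnd ℂ) (G (x + t)) * fourier (-1) (n • t))
      = ((‖∫ x : 𝕋, G x * fourier 1 (n • x)‖ ^ 2 : ℝ) : ℂ) := by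
  set K : 𝕋 → ℂ := fun s => G s * fourier 1 (n • s) with hK
  set c : ℂ := ∫ x : 𝕋, K x with hc
  have hpt : ∀ x t : 𝕋, G x * (starRingEnd ℂ) (G (x + t)) * fourier (-1) (n • t)
      = K x * (starRingEnd ℂ) (K (x + t)) := by
    intro x t
    have hone : fourier (-1) (n • x) * fourier 1 (n • x) = 1 := by
      rw [← fourier_add]
      norm_num
    simp only [hK, smul_add, fourier_arg_add, map_mul, ← fourier_neg]
    linear_combination (-(G x * (starRingEnd ℂ) (G (x + t)) * fourier (-1) (n • t))) * hone
  have hinner : ∀ x : 𝕋, (∫ t : 𝕋, G x * (starRingEnd ℂ) (G (x + t)) * fourier (-1) (n • t))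
      = K x * (starRingEnd ℂ) c := by
    intro x
    simp only [hpt]
    rw [MeasureTheory.integral_const_mul]
    congr 1
    have h2 : (∫ t : 𝕋, (starRingEnd ℂ) (K (x + t)))
        = ∫ s : 𝕋, (starRingEnd ℂ) (K s) :=
      integral_add_left_eq_self (fun s => (starRingEnd ℂ) (K s)) x
    rw [h2, integral_conj]
  simp only [hinner]
  rw [MeasureTheory.integral_mul_const, ← hc, Complex.mul_conj]
  rw [Complex.normSq_eq_norm_sq]

/-- The key "peel one coordinate" identity. -/
lemma peel (m : ℕ) (f : 𝕋 → ℂ) (hf : Measurable f) (M : ℝ) (hfb : ∀ x, ‖f x‖ ≤ M)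
    (j : Fin (m+1)) (η : Fin (m+1) → ℤ) :
    (∫ x : 𝕋, ∫ u : Fin (m+1) → 𝕋, gowersBox (m+1) f x u * fourier (-1) (∑ i, η i • u i))
      = ∫ u' : Fin m → 𝕋, fourier (-1) (∑ i', η (j.succAbove i') • u' i') *
          ((‖∫ x : 𝕋, gowersBox m f x u' * fourier 1 (η j • x)‖ ^ 2 : ℝ) : ℂ) := by
  set B : ℝ := (max M 0) ^ (2 ^ (m+1)) with hB
  set e := MeasurableEquiv.piFinSuccAbove (fun _ : Fin (m+1) => 𝕋) j with he
  have hmp : MeasurePreserving (⇑e.symm) :=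
    (volume_preserving_piFinSuccAbove (fun _ : Fin (m+1) => 𝕋) j).symm
  set F : 𝕋 × (Fin (m+1) → 𝕋) → ℂ :=
    fun q => gowersBox (m+1) f q.1 q.2 * fourier (-1) (∑ i, η i • q.2 i) with hF
  have hFm : Measurable F := by
    refine (measurable_gowersBox (m+1) f hf).mul ?_
    refine (map_continuous (fourier (-1))).measurable.comp ?_
    refine Finset.measurable_sum _ fun i _ => ?_
    exact (continuous_zsmul (η i)).measurable.comp (measurable_snd.eval)
  have hFb : ∀ q, ‖F q‖ ≤ B := by
    intro q
    rw [hF]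
    simp only [norm_mul]
    have h1 : ‖fourier (-1) (∑ i, η i • q.2 i)‖ = 1 := Circle.norm_coe _
    rw [h1, mul_one]
    exact norm_gowersBox_le (m+1) f M hfb _ _
  set H : 𝕋 × (𝕋 × (Fin m → 𝕋)) → ℂ := fun q => F (q.1, e.symm q.2) with hH
  have hHm : Measurable H :=
    hFm.comp (measurable_fst.prodMk (e.symm.measurable.comp measurable_snd))
  have hHb : ∀ q, ‖H q‖ ≤ B := fun q => hFb _
  have hHint : Integrable H ((volume : Measure 𝕋).prod
      ((volume : Measure 𝕋).prod (volume : Measure (Fin m → 𝕋)))) :=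
    integrable_of_bdd hHm.aestronglyMeasurable hHb
  -- step 1: insert coordinates
  have step1 : ∀ x : 𝕋, (∫ u : Fin (m+1) → 𝕋, F (x, u))
      = ∫ p : 𝕋 × (Fin m → 𝕋), H (x, p) := by
    intro x
    exact (hmp.integral_comp e.symm.measurableEmbedding (fun u => F (x, u))).symm
  have step2 : (∫ x : 𝕋, ∫ u : Fin (m+1) → 𝕋,
        gowersBox (m+1) f x u * fourier (-1) (∑ i, η i • u i))
      = ∫ x : 𝕋, ∫ p : 𝕋 × (Fin m → 𝕋), H (x, p) := by
    simp only [← step1]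
    rfl
  -- step 3: Fubini swaps
  have step3 : (∫ x : 𝕋, ∫ p : 𝕋 × (Fin m → 𝕋), H (x, p))
      = ∫ p : 𝕋 × (Fin m → 𝕋), ∫ x : 𝕋, H (x, p) := by
    rw [Measure.volume_eq_prod]
    exact integral_integral_swap hHint
  have hGint : Integrable (fun p : 𝕋 × (Fin m → 𝕋) => ∫ x : 𝕋, H (x, p))
      ((volume : Measure 𝕋).prod (volume : Measure (Fin m → 𝕋))) :=
    hHint.integral_prod_right
  have step4 : (∫ p : 𝕋 × (Fin m → 𝕋), ∫ x : 𝕋, H (x, p))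
      = ∫ t : 𝕋, ∫ u' : Fin m → 𝕋, ∫ x : 𝕋, H (x, (t, u')) := by
    rw [Measure.volume_eq_prod]
    exact integral_prod _ hGint
  have step5 : (∫ t : 𝕋, ∫ u' : Fin m → 𝕋, ∫ x : 𝕋, H (x, (t, u')))
      = ∫ u' : Fin m → 𝕋, ∫ t : 𝕋, ∫ x : 𝕋, H (x, (t, u')) :=
    integral_integral_swap hGint
  -- key computation for fixed u'
  have key : ∀ u' : Fin m → 𝕋, (∫ t : 𝕋, ∫ x : 𝕋, H (x, (t, u')))
      = fourier (-1) (∑ i', η (j.succAbove i') • u' i') *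
          ((‖∫ x : 𝕋, gowersBox m f x u' * fourier 1 (η j • x)‖ ^ 2 : ℝ) : ℂ) := by
    intro u'
    have hint2 : Integrable (Function.uncurry fun t x : 𝕋 => H (x, (t, u')))
        ((volume : Measure 𝕋).prod (volume : Measure 𝕋)) := by
      refine integrable_of_bdd ?_ (C := B) (fun q => hHb _)
      exact (hHm.comp ((measurable_snd).prodMk
        (measurable_fst.prodMk measurable_const))).aestronglyMeasurable
    have hsw : (∫ t : 𝕋, ∫ x : 𝕋, H (x, (t, u')))
        = ∫ x : 𝕋, ∫ t : 𝕋, H (x, (t, u')) := integral_integral_swap hint2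
    have hpt : ∀ x t : 𝕋, H (x, (t, u'))
        = (gowersBox m f x u' * (starRingEnd ℂ) (gowersBox m f (x + t) u') *
            fourier (-1) (η j • t)) * fourier (-1) (∑ i', η (j.succAbove i') • u' i') := by
      intro x t
      have he2 : e.symm (t, u') = j.insertNth t u' := by
        simp [he, MeasurableEquiv.piFinSuccAbove, Fin.insertNthEquiv]
      show F (x, e.symm (t, u')) = _
      rw [he2, hF]
      simp only
      rw [gowersBox_insertNth]
      have hph : (∑ i, η i • (j.insertNth t u') i)
          = η j • t + ∑ i', η (j.succAbove i') • u' i' := by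
        rw [Fin.sum_univ_succAbove (fun i => η i • (j.insertNth (α := fun _ => 𝕋) t u') i) j]
        simp
      rw [hph, fourier_arg_add]
      ring
    rw [hsw]
    simp only [hpt]
    simp only [MeasureTheory.integral_mul_const]
    rw [corr_integral (fun x => gowersBox m f x u') (η j)]
    ring
  rw [step2, step3, step4, step5]
  exact integral_congr_ae (Filter.Eventually.of_forall fun u' => key u')


/-- Norm bound consequence of `peel`. -/
lemma peel_norm_le (m : ℕ) (f : 𝕋 → ℂ) (hf : Measurable f) (M : ℝ) (hfb : ∀ x, ‖f x‖ ≤ M)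
    (j : Fin (m+1)) (η : Fin (m+1) → ℤ) :
    ‖∫ x : 𝕋, ∫ u : Fin (m+1) → 𝕋, gowersBox (m+1) f x u * fourier (-1) (∑ i, η i • u i)‖
      ≤ ∫ u' : Fin m → 𝕋, ‖∫ x : 𝕋, gowersBox m f x u' * fourier 1 (η j • x)‖ ^ 2 := by
  rw [peel m f hf M hfb j η]
  refine le_trans (norm_integral_le_integral_norm _) (le_of_eq ?_)
  refine integral_congr_ae (Filter.Eventually.of_forall fun u' => ?_)
  have h1 : ‖fourier (-1) (∑ i', η (j.succAbove i') • u' i')‖ = 1 := Circle.norm_coe _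
  simp only [norm_mul, h1, one_mul, Complex.norm_real, Real.norm_eq_abs]
  exact abs_of_nonneg (sq_nonneg _)

/-- Diagonal value consequence of `peel`. -/
lemma peel_diag (m : ℕ) (f : 𝕋 → ℂ) (hf : Measurable f) (M : ℝ) (hfb : ∀ x, ‖f x‖ ≤ M)
    (j : Fin (m+1)) (η : Fin (m+1) → ℤ) :
    (∫ x : 𝕋, ∫ u : Fin (m+1) → 𝕋, gowersBox (m+1) f x u *
        fourier (-1) (∑ i, (if i = j then η j else 0) • u i))
      = (((∫ u' : Fin m → 𝕋, ‖∫ x : 𝕋, gowersBox m f x u' * fourier 1 (η j • x)‖ ^ 2) : ℝ) : ℂ) := by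
  rw [peel m f hf M hfb j (fun i => if i = j then η j else 0)]
  have h1 : ∀ u' : Fin m → 𝕋,
      (∑ i', (if j.succAbove i' = j then η j else 0) • u' i') = (0 : 𝕋) := by
    intro u'
    refine Finset.sum_eq_zero fun i' _ => ?_
    rw [if_neg (Fin.succAbove_ne j i')]
    exact zero_zsmul _
  simp only [h1, if_pos rfl, fourier_eval_zero, one_mul]
  exact integral_ofReal

end GowersBoxAux

open GowersBoxAux in
/-- **The Fourier coefficients of the Gowers form are maximized at `η = 0`:** for `k ≥ 2`,
bounded measurable `f : 𝕋 → ℂ` and every `η ∈ ℤ^k`,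
`|∫_𝕋 ∫_{𝕋^k} △^k f(x; u) e^{−2πi η·u} du dx| ≤ ∫_𝕋 ∫_{𝕋^k} △^k f(x; u) du dx`; in
particular (via the partial order on `ℂ`) the right-hand side is a nonnegative real number. -/
theorem gowersBox_fourierCoeff_le
    (k : ℕ) (hk : 2 ≤ k)
    (f : UnitAddCircle → ℂ) (hf : Measurable f) (hfbdd : ∃ M, ∀ x, ‖f x‖ ≤ M)
    (η : Fin k → ℤ) :
    ((‖∫ x : UnitAddCircle, ∫ u : Fin k → UnitAddCircle,
        gowersBox k f x u * fourier (-1) (∑ i, η i • u i)‖ : ℝ) : ℂ) ≤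
      ∫ x : UnitAddCircle, ∫ u : Fin k → UnitAddCircle, gowersBox k f x u := by
  obtain ⟨M, hfb⟩ := hfbdd
  obtain ⟨m, rfl⟩ : ∃ m, k = m + 1 + 1 := ⟨k - 2, by omega⟩
  set j0 : Fin (m + 1 + 1) := 0 with hj0
  set j1 : Fin (m + 1 + 1) := Fin.last (m + 1) with hj1
  have hj01 : j1 ≠ j0 := by
    simp [hj0, hj1, Fin.ext_iff]
  set η1 : Fin (m + 1 + 1) → ℤ := fun i => if i = j0 then η j0 else 0 with hη1
  have h1 := peel_norm_le (m+1) f hf M hfb j0 η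
  have h2 := peel_diag (m+1) f hf M hfb j0 η
  have h3 := peel_norm_le (m+1) f hf M hfb j1 η1
  have h4 := peel_diag (m+1) f hf M hfb j1 η1
  set R1 : ℝ := ∫ u' : Fin (m+1) → 𝕋,
    ‖∫ x : 𝕋, gowersBox (m+1) f x u' * fourier 1 (η j0 • x)‖ ^ 2 with hR1def
  set R2 : ℝ := ∫ u' : Fin (m+1) → 𝕋,
    ‖∫ x : 𝕋, gowersBox (m+1) f x u' * fourier 1 (η1 j1 • x)‖ ^ 2 with hR2def
  have hR1 : (0:ℝ) ≤ R1 := integral_nonneg fun _ => sq_nonneg _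
  -- the "η1" integral written in two ways
  have h2' : (∫ x : 𝕋, ∫ u : Fin (m+1+1) → 𝕋, gowersBox (m+1+1) f x u *
      fourier (-1) (∑ i, η1 i • u i)) = ((R1 : ℝ) : ℂ) := h2
  -- zero-frequency form
  have hval : η1 j1 = 0 := by rw [hη1]; simp [hj01]
  simp only [hval, ite_self, zero_zsmul, Finset.sum_const_zero, fourier_eval_zero,
    mul_one] at h4
  rw [h4]
  rw [Complex.real_le_real]
  have h6 : ‖∫ x : 𝕋, ∫ u : Fin (m+1+1) → 𝕋, gowersBox (m+1+1) f x u *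
      fourier (-1) (∑ i, η1 i • u i)‖ = R1 := by
    rw [h2', Complex.norm_real, Real.norm_eq_abs]; exact _root_.abs_of_nonneg hR1
  calc ‖∫ x : 𝕋, ∫ u : Fin (m+1+1) → 𝕋, gowersBox (m+1+1) f x u *
      fourier (-1) (∑ i, η i • u i)‖ ≤ R1 := h1
    _ = ‖∫ x : 𝕋, ∫ u : Fin (m+1+1) → 𝕋, gowersBox (m+1+1) f x u *
      fourier (-1) (∑ i, η1 i • u i)‖ := h6.symm
    _ ≤ R2 := h3
end
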